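/- For all n ≥ 2, the total number of leaves over all plane trees on n vertices equals (1/2)·binom(2n-2, n-1). -/

import Mathlib

/-!
A tree on `m + 1` vertices is a root over a forest on `m` vertices, and a nonempty forest
is a first tree followed by a forest. With `L m` the total number of leaves over all forests
on `m` vertices and `c m = catalan m` their number, this decomposition gives
`L (m + 1) = ∑_{i + j = m} (2 L i + [i = 0]) c j`, where the indicator accounts for the
one-vertex tree, whose root is a leaf. By strong induction `2 L i + [i = 0] = (i + 1) c i`,
and symmetrising `i ↔ j` gives `2 ∑_{i + j = m} (i + 1) c i c j = (m + 2) c (m + 1)`.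
Hence `2 L (m + 1) = (m + 2) c (m + 1) = binom(2m + 2, m + 1)`, and `L (m + 1)` is the total
number of leaves over the trees on `m + 2` vertices.
-/

inductive PlaneTree : Type where
  | node : List PlaneTree → PlaneTree

namespace PlaneTree

mutual
def size : PlaneTree → ℕ
  | .node ts => 1 + sizeList ts
def sizeList : List PlaneTree → ℕ
  | [] => 0
  | t :: ts => size t + sizeList ts
end

mutual
def positions : PlaneTree → List (List ℕ)
  | .node ts => [] :: positionsList 0 ts
def positionsList : ℕ → List PlaneTree → List (List ℕ)
  | _, [] => []
  | i, t :: ts => (positions t).map (i :: ·) ++ positionsList (i+1) ts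
end

mutual
def leafPositions : PlaneTree → List (List ℕ)
  | .node [] => [[]]
  | .node (t :: ts) => leafList 0 (t :: ts)
def leafList : ℕ → List PlaneTree → List (List ℕ)
  | _, [] => []
  | i, t :: ts => (leafPositions t).map (i :: ·) ++ leafList (i+1) ts
end

def isPrefixB : List ℕ → List ℕ → Bool
  | [], _ => true
  | _ :: _, [] => false
  | a :: as, b :: bs => a == b && isPrefixB as bs

def lcpLen : List ℕ → List ℕ → ℕ
  | a :: as, b :: bs => if a = b then 1 + lcpLen as bs else 0
  | _, _ => 0

/-- number of edges on the path between two vertices given by positions -/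
def pathDist (p q : List ℕ) : ℕ :=
  (p.length - lcpLen p q) + (q.length - lcpLen p q)

/-- number of vertical paths (vertex, proper descendant) in a tree -/
def verticalPairs (T : PlaneTree) : ℕ :=
  ((positions T).map (fun q =>
    ((positions T).filter (fun p => p != q && isPrefixB p q)).length)).sum

/-- total number of edges over all vertical paths in a tree -/
def verticalEdges (T : PlaneTree) : ℕ :=
  ((positions T).map (fun q =>
    (((positions T).filter (fun p => p != q && isPrefixB p q)).map
      (fun p => q.length - p.length)).sum)).sum

/-- number of (unordered) paths between distinct vertices -/
def pathCount (T : PlaneTree) : ℕ := ((positions T).sublistsLen 2).length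

/-- Wiener index: sum of distances over unordered pairs of distinct vertices -/
def wiener (T : PlaneTree) : ℕ :=
  (((positions T).sublistsLen 2).map (fun l =>
    match l with
    | [p, q] => pathDist p q
    | _ => 0)).sum

end PlaneTree

namespace PlaneTree

open Finset

theorem node_injective : Function.Injective node := fun _ _ => node.inj

def consNode : List PlaneTree × List PlaneTree ↪ List PlaneTree :=
  ⟨fun p => node p.1 :: p.2, fun _ _ h => by simpa [Prod.ext_iff] using h⟩

@[simp] theorem consNode_apply (p : List PlaneTree × List PlaneTree) :
    consNode p = node p.1 :: p.2 := rfl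

open scoped Classical in
noncomputable def forestsOfSize : ℕ → Finset (List PlaneTree)
  | 0 => {[]}
  | m + 1 => (antidiagonal m).attach.biUnion fun p =>
      (forestsOfSize p.1.1 ×ˢ forestsOfSize p.1.2).map consNode
  decreasing_by
    · exact Nat.antidiagonal.fst_lt p.2
    · exact Nat.antidiagonal.snd_lt p.2

theorem mem_forestsOfSize {m : ℕ} {ts : List PlaneTree} :
    ts ∈ forestsOfSize m ↔ sizeList ts = m := by
  induction m using Nat.strong_induction_on generalizing ts with
  | _ m ih =>
  cases m with
  | zero =>
    cases ts with
    | nil => simp [forestsOfSize, sizeList]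
    | cons t ts => cases t; simp [forestsOfSize, sizeList, size]
  | succ m =>
    rw [forestsOfSize]
    simp only [mem_biUnion, mem_attach, true_and, mem_map, mem_product, Subtype.exists,
      HasAntidiagonal.mem_antidiagonal, Prod.exists, consNode_apply]
    constructor
    · rintro ⟨i, j, hij, vs, us, ⟨hvs, hus⟩, rfl⟩
      rw [ih i (by omega)] at hvs
      rw [ih j (by omega)] at hus
      simp only [sizeList, size]
      omega
    · intro h
      obtain _ | ⟨⟨vs⟩, us⟩ := ts
      · simp [sizeList] at h
      · simp only [sizeList, size] at h
        refine ⟨sizeList vs, sizeList us, by omega, vs, us, ⟨?_, ?_⟩, rfl⟩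
        · exact (ih _ (by omega)).2 rfl
        · exact (ih _ (by omega)).2 rfl

open scoped Classical in
theorem sum_forestsOfSize_succ {M : Type*} [AddCommMonoid M] (m : ℕ) (f : List PlaneTree → M) :
    ∑ ts ∈ forestsOfSize (m + 1), f ts =
      ∑ p ∈ antidiagonal m, ∑ vs ∈ forestsOfSize p.1, ∑ us ∈ forestsOfSize p.2,
        f (node vs :: us) := by
  rw [forestsOfSize, sum_biUnion, ← sum_attach (antidiagonal m)]
  · refine sum_congr rfl fun p _ => ?_
    rw [sum_map, sum_product]
    rfl
  · rintro ⟨p, hp⟩ - ⟨q, hq⟩ - hpq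
    refine disjoint_left.2 ?_
    simp only [mem_map, mem_product, consNode_apply, mem_forestsOfSize, Prod.exists]
    rintro _ ⟨vs, us, ⟨hp₁, hp₂⟩, rfl⟩ ⟨vs', us', ⟨hq₁, hq₂⟩, h⟩
    simp only [List.cons.injEq, node.injEq] at h
    obtain ⟨rfl, rfl⟩ := h
    exact hpq (Subtype.ext (Prod.ext (hp₁ ▸ hq₁) (hp₂ ▸ hq₂)))

theorem card_forestsOfSize (m : ℕ) : #(forestsOfSize m) = catalan m := by
  induction m using Nat.strong_induction_on with
  | _ m ih =>
  cases m with
  | zero => simp [forestsOfSize]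
  | succ m =>
    rw [card_eq_sum_ones, sum_forestsOfSize_succ, catalan_succ']
    refine sum_congr rfl fun p hp => ?_
    simp only [sum_const, smul_eq_mul, mul_one, ih _ (Nat.antidiagonal.fst_lt hp),
      ih _ (Nat.antidiagonal.snd_lt hp)]

def leafCount (ts : List PlaneTree) : ℕ := (ts.map fun t => t.leafPositions.length).sum

@[simp] theorem leafCount_nil : leafCount [] = 0 := rfl

@[simp] theorem leafCount_cons (t : PlaneTree) (ts : List PlaneTree) :
    leafCount (t :: ts) = t.leafPositions.length + leafCount ts := by
  simp [leafCount]

theorem length_leafList (i : ℕ) (ts : List PlaneTree) :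
    (leafList i ts).length = leafCount ts := by
  induction ts generalizing i <;> simp [leafList, *]

theorem length_leafPositions_node (ts : List PlaneTree) :
    (node ts).leafPositions.length = if ts = [] then 1 else leafCount ts := by
  cases ts <;> simp [leafPositions, length_leafList]

noncomputable def totalLeaves (m : ℕ) : ℕ := ∑ ts ∈ forestsOfSize m, leafCount ts

theorem sum_length_leafPositions_node (m : ℕ) :
    ∑ ts ∈ forestsOfSize m, (node ts).leafPositions.length =
      totalLeaves m + if m = 0 then 1 else 0 := by
  cases m with
  | zero => simp [forestsOfSize, totalLeaves, leafPositions]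
  | succ m =>
    refine sum_congr rfl fun ts hts => ?_
    rw [length_leafPositions_node, if_neg]
    rintro rfl
    simp [mem_forestsOfSize, sizeList] at hts

theorem totalLeaves_succ (m : ℕ) :
    totalLeaves (m + 1) = ∑ p ∈ antidiagonal m,
      (2 * totalLeaves p.1 + if p.1 = 0 then 1 else 0) * catalan p.2 := by
  have hsplit : ∀ p ∈ antidiagonal m,
      ∑ vs ∈ forestsOfSize p.1, ∑ us ∈ forestsOfSize p.2, leafCount (node vs :: us) =
        (totalLeaves p.1 + if p.1 = 0 then 1 else 0) * catalan p.2 +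
          catalan p.1 * totalLeaves p.2 := by
    intro p _
    simp only [leafCount_cons, sum_add_distrib, sum_const, card_forestsOfSize, smul_eq_mul,
      ← mul_sum, sum_length_leafPositions_node]
    rw [totalLeaves, totalLeaves]
    ring
  rw [totalLeaves, sum_forestsOfSize_succ, sum_congr rfl hsplit, sum_add_distrib,
    ← Nat.sum_antidiagonal_swap (f := fun p => catalan p.1 * totalLeaves p.2),
    ← sum_add_distrib]
  refine sum_congr rfl fun p _ => ?_
  simp only [Prod.fst_swap, Prod.snd_swap]
  ring

theorem two_mul_sum_antidiagonal_succ_mul_catalan (m : ℕ) :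
    2 * ∑ p ∈ antidiagonal m, (p.1 + 1) * (catalan p.1 * catalan p.2) =
      (m + 2) * catalan (m + 1) := by
  rw [two_mul]
  nth_rw 2 [← Nat.sum_antidiagonal_swap]
  rw [← sum_add_distrib, catalan_succ', mul_sum]
  refine sum_congr rfl fun p hp => ?_
  rw [HasAntidiagonal.mem_antidiagonal] at hp
  simp only [Prod.fst_swap, Prod.snd_swap, ← hp]
  ring

theorem two_mul_totalLeaves_add_ite (m : ℕ) :
    2 * totalLeaves m + (if m = 0 then 1 else 0) = (m + 1) * catalan m := by
  induction m using Nat.strong_induction_on with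
  | _ m ih =>
  cases m with
  | zero => simp [totalLeaves, forestsOfSize]
  | succ m =>
    rw [if_neg m.succ_ne_zero, add_zero, totalLeaves_succ,
      ← two_mul_sum_antidiagonal_succ_mul_catalan]
    congr 1
    refine sum_congr rfl fun p hp => ?_
    rw [ih p.1 (Nat.antidiagonal.fst_lt hp), mul_assoc]

theorem finsum_size_eq_sum_forestsOfSize {M : Type*} [AddCommMonoid M] (m : ℕ)
    (f : PlaneTree → M) :
    ∑ᶠ T : {T : PlaneTree // T.size = m + 1}, f T =
      ∑ ts ∈ forestsOfSize m, f (node ts) := by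
  rw [finsum_subtype_eq_finsum_cond,
    finsum_cond_eq_sum_of_cond_iff f (t := (forestsOfSize m).map ⟨node, node_injective⟩),
    sum_map]
  · rfl
  rintro ⟨ts⟩ -
  simp only [mem_map, mem_forestsOfSize, size, Function.Embedding.coeFn_mk,
    node_injective.eq_iff, exists_eq_right]
  omega

end PlaneTree

open PlaneTree

theorem total_leaves_plane_trees (n : ℕ) (hn : 2 ≤ n) :
    (∑ᶠ T : {T : PlaneTree // T.size = n}, ((T.1.leafPositions).length : ℚ))
      = (1 / 2) * ((2 * n - 2).choose (n - 1)) := by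
  obtain ⟨m, rfl⟩ : ∃ m, n = m + 1 + 1 := ⟨n - 2, by omega⟩
  have hcount : 2 * totalLeaves (m + 1) = (2 * (m + 1)).choose (m + 1) := by
    simpa [succ_mul_catalan_eq_centralBinom, Nat.centralBinom] using
      two_mul_totalLeaves_add_ite (m + 1)
  rw [finsum_size_eq_sum_forestsOfSize (m + 1) fun T => (T.leafPositions.length : ℚ),
    ← Nat.cast_sum, sum_length_leafPositions_node, if_neg m.succ_ne_zero, add_zero,
    show 2 * (m + 1 + 1) - 2 = 2 * (m + 1) by omega, Nat.add_sub_cancel, ← hcount]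
  push_cast
  ring
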